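/- arXiv:1506.04406 — 3 statements merged into one kernel-verified Lean document; each statement's English description precedes it below -/
import Mathlib

section
/- For any permutations σ ≤ π in the permutation pattern poset 𝒫, the Möbius function satisfies μ(σ,π) = (−1)^{|π|−|σ|}·NE(σ,π) + Σ_{λ : σ ≤ λ < π} μ(σ,λ) · Σ_{S ∈ EZ^{λ,π}} (−1)^{|S|}. -/
open scoped Classical

set_option maxHeartbeats 1000000

/-! ## The permutation pattern poset -/

/-- The type of all (finite) permutations: a permutation of length `n` is an element of
`Equiv.Perm (Fin n)`; the letter in position `i` is `p.2 i` (letters compared via the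
order on `Fin n`). -/
abbrev PermPat : Type := Σ n : ℕ, Equiv.Perm (Fin n)

/-- Pattern containment: `PatLe σ π` iff `π` has a subsequence in the same relative order
as `σ`, i.e. there is an occurrence of `σ` in `π`. -/
def PatLe (p q : PermPat) : Prop :=
  ∃ f : Fin p.1 ↪o Fin q.1, ∀ i j : Fin p.1, p.2 i < p.2 j ↔ q.2 (f i) < q.2 (f j)

lemma patLe_refl (p : PermPat) : PatLe p p := by
  refine ⟨(OrderIso.refl (Fin p.1)).toOrderEmbedding, fun i j => ?_⟩
  simp

lemma patLe_trans {p q r : PermPat} (h1 : PatLe p q) (h2 : PatLe q r) : PatLe p r := by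
  obtain ⟨f, hf⟩ := h1
  obtain ⟨g, hg⟩ := h2
  exact ⟨f.trans g, fun i j => (hf i j).trans (hg (f i) (f j))⟩

lemma PatLe.len_le {p q : PermPat} (h : PatLe p q) : p.1 ≤ q.1 := by
  obtain ⟨f, -⟩ := h
  simpa using Fintype.card_le_of_embedding f.toEmbedding

lemma StrictMono.fin_apply_eq {n : ℕ} {f : Fin n → Fin n} (hf : StrictMono f) (i : Fin n) :
    f i = i := by
  have hle : ∀ m : ℕ, ∀ j : Fin n, j.val = m → j.val ≤ (f j).val := by
    intro m
    induction m with
    | zero => intro j hj; omega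
    | succ m ih =>
      intro j hj
      have hm : m < n := by omega
      have h1 : f ⟨m, hm⟩ < f j := hf (by simp [Fin.lt_def]; omega)
      have h2 := ih ⟨m, hm⟩ rfl
      simp only [Fin.lt_def] at h1
      simp only [Fin.val_mk] at h1 h2
      omega
  have hge : ∀ m : ℕ, ∀ j : Fin n, j.val + m + 1 = n → (f j).val ≤ j.val := by
    intro m
    induction m with
    | zero => intro j hj; have := (f j).isLt; omega
    | succ m ih =>
      intro j hj
      have hs : j.val + 1 < n := by omega
      have h1 : f j < f ⟨j.val + 1, hs⟩ := hf (by simp [Fin.lt_def])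
      have h2 := ih ⟨j.val + 1, hs⟩ (by simp only [Fin.val_mk]; omega)
      simp only [Fin.lt_def] at h1
      simp only [Fin.val_mk] at h1 h2
      omega
  exact Fin.ext (le_antisymm (hge (n - 1 - i.val) i (by have := i.isLt; omega)) (hle i.val i rfl))

lemma patLe_antisymm {p q : PermPat} (hpq : PatLe p q) (hqp : PatLe q p) : p = q := by
  obtain ⟨k, σ⟩ := p
  obtain ⟨n, π⟩ := q
  have hkn : k = n := le_antisymm hpq.len_le hqp.len_le
  subst hkn
  obtain ⟨f, hf⟩ := hpq
  have hfid : ∀ i, f i = i := fun i => f.strictMono.fin_apply_eq i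
  have key : ∀ i j : Fin k, σ i < σ j ↔ π i < π j := by
    intro i j
    simpa [hfid] using hf i j
  have hmono : StrictMono (fun a => π (σ.symm a)) := by
    intro a b hab
    have : σ (σ.symm a) < σ (σ.symm b) := by simpa using hab
    exact (key _ _).mp this
  have hid : ∀ a, π (σ.symm a) = a := fun a => hmono.fin_apply_eq a
  have hσπ : σ = π := by
    apply Equiv.ext
    intro x
    have := hid (σ x)
    simpa using this.symm
  rw [hσπ]

/-- The permutation pattern poset `𝒫`. -/
instance : PartialOrder PermPat where
  le := PatLe
  le_refl := patLe_refl
  le_trans _ _ _ := patLe_trans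
  le_antisymm _ _ := patLe_antisymm

lemma PermPat.le_def {p q : PermPat} : p ≤ q ↔ PatLe p q := Iff.rfl

/-! ## The Möbius function of the pattern poset

`permMu` is the Möbius function of the pattern poset: `μ(σ,σ) = 1`,
`μ(σ,π) = -∑_{σ ≤ z < π} μ(σ,z)` for `σ < π`, and `μ(σ,π) = 0` if `σ ≰ π`.
(Every `z < π` is of length strictly smaller than `π`, so the inner sum ranges over
the permutations of each length `m < |π|`.) -/
noncomputable def permMu (p q : PermPat) : ℤ :=
  if p = q then 1
  else if PatLe p q then
    - ∑ m : Fin q.1, ∑ z : Equiv.Perm (Fin m.1),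
        if PatLe p ⟨m.1, z⟩ ∧ PatLe ⟨m.1, z⟩ q then permMu p ⟨m.1, z⟩ else 0
  else 0
termination_by q.1
decreasing_by exact m.isLt

/-! ## The Möbius function of a finite poset -/

/-- The Möbius function `μ(a,b)` of a finite poset. -/
noncomputable def muPair {X : Type*} [PartialOrder X] [Fintype X] (a b : X) : ℤ :=
  if a = b then 1
  else if a ≤ b then
    - ∑ z ∈ (Finset.univ.filter fun z : X => a ≤ z ∧ z < b).attach, muPair a z.1
  else 0
termination_by Set.ncard {z : X | z < b}
decreasing_by
  rename_i z
  have hz : z.1 < b := ((Finset.mem_filter.mp z.2).2).2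
  exact Set.ncard_lt_ncard
    ((Set.ssubset_iff_of_subset (fun w hw => lt_trans hw hz)).mpr ⟨z.1, hz, fun hmem => absurd hmem (by exact lt_irrefl _)⟩)
    (Set.toFinite _)

instance instFiniteOption' {α : Type*} [Finite α] : Finite (Option α) :=
  Finite.of_equiv (α ⊕ PUnit.{1}) (Equiv.optionEquivSumPUnit.{0} α).symm
instance {α : Type*} [Finite α] : Finite (WithTop α) := inferInstanceAs (Finite (Option α))
instance {α : Type*} [Finite α] : Finite (WithBot α) := inferInstanceAs (Finite (Option α))
instance {α : Type*} [Fintype α] : Fintype (WithTop α) := inferInstanceAs (Fintype (Option α))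
instance {α : Type*} [Fintype α] : Fintype (WithBot α) := inferInstanceAs (Fintype (Option α))

/-- For a finite poset `X`, `muHat X` is `μ(0̂,1̂)` computed in the poset obtained from `X`
by adjoining a new bottom element `0̂` and a new top element `1̂`.  (For infinite `X` the
junk value `0` is returned.) -/
noncomputable def muHat (X : Type*) [PartialOrder X] : ℤ :=
  if h : Finite X then
    letI := h
    letI : Fintype (WithBot (WithTop X)) := Fintype.ofFinite _
    muPair (⊥ : WithBot (WithTop X)) ⊤
  else 0

/-! ## Adjacencies, embeddings, normality -/

/-- The position one step before `j` (or `j` itself when `j = 0`). -/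
def prevPos {n : ℕ} (j : Fin n) : Fin n := ⟨j.val - 1, lt_of_le_of_lt (Nat.sub_le _ _) j.isLt⟩

/-- `Linked π j` says position `j` is linked to the preceding position, i.e. the letters in
positions `j-1, j` have consecutive values.  These are exactly the positions lying in the
tail of some adjacency of `π` (an adjacency is a maximal factor of consecutively valued
increasing or decreasing letters; its tail is all but its first letter). -/
def Linked {n : ℕ} (π : Equiv.Perm (Fin n)) (j : Fin n) : Prop :=
  0 < j.val ∧ ((π j).val + 1 = (π (prevPos j)).val ∨ (π (prevPos j)).val + 1 = (π j).val)

/-- The number of adjacencies (maximal linked runs) of `π`. -/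
noncomputable def numBlocks {n : ℕ} (π : Equiv.Perm (Fin n)) : ℕ :=
  (Finset.univ.filter fun j : Fin n => ¬ Linked π j).card

/-- The index (starting from 0) of the adjacency of `π` containing position `j`. -/
noncomputable def blockIdx {n : ℕ} (π : Equiv.Perm (Fin n)) (j : Fin n) : ℕ :=
  (Finset.univ.filter fun m : Fin n => ¬ Linked π m ∧ m ≤ j).card - 1

/-- The set of positions in the `i`-th adjacency of `π`. -/
noncomputable def blockF {n : ℕ} (π : Equiv.Perm (Fin n)) (i : ℕ) : Finset (Fin n) :=
  Finset.univ.filter fun j => blockIdx π j = i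

/-- The standardization of an injective tuple `v` of values in `Fin n`: the permutation of
`Fin m` whose letters are in the same relative order as `v`. -/
noncomputable def stdize {m n : ℕ} (v : Fin m → Fin n) (hv : Function.Injective v) :
    Equiv.Perm (Fin m) :=
  (Equiv.ofInjective v hv).trans
    (monoEquivOfFin (Set.range v)
      (by rw [Set.card_range_of_injective hv, Fintype.card_fin])).symm.toEquiv

/-- The pattern (as an abstract permutation) formed by the letters of `π` in the set `E`
of positions. -/
noncomputable def patternOf {n : ℕ} (π : Equiv.Perm (Fin n)) (E : Finset (Fin n)) : PermPat :=
  ⟨E.card, stdize (fun i => π ((E.orderIsoOfFin rfl) i))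
    (by
      intro i j hij
      exact (E.orderIsoOfFin rfl).injective (Subtype.coe_injective (π.injective hij)))⟩

/-- `E` is (the set of positions of the nonzero entries of) an embedding of `p` in `π`:
the letters of `π` in positions `E` form an occurrence of `p`. -/
def IsEmb (p : PermPat) {n : ℕ} (π : Equiv.Perm (Fin n)) (E : Finset (Fin n)) : Prop :=
  patternOf π E = p

/-- An embedding (given by its set `E` of nonzero positions) is normal if every position in
the tail of an adjacency of `π` is nonzero. -/
def IsNormal {n : ℕ} (π : Equiv.Perm (Fin n)) (E : Finset (Fin n)) : Prop :=
  ∀ j, Linked π j → j ∈ E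

/-- `NE p π`: the number of normal embeddings of `p` in `π`. -/
noncomputable def NE (p : PermPat) {n : ℕ} (π : Equiv.Perm (Fin n)) : ℕ :=
  Set.ncard {E : Finset (Fin n) | IsEmb p π E ∧ IsNormal π E}

/-- An embedding is rightmost if, within each adjacency of `π`, all of its zero entries
precede all of its nonzero entries. -/
def IsRightmost {n : ℕ} (π : Equiv.Perm (Fin n)) (E : Finset (Fin n)) : Prop :=
  ∀ i j : Fin n, blockIdx π i = blockIdx π j → i ≤ j → i ∈ E → j ∈ E

/-- Membership in `Ê^{p,π}`, the set of rightmost embeddings of `p` in `π`. -/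
def EhatMem (p : PermPat) {n : ℕ} (π : Equiv.Perm (Fin n)) (E : Finset (Fin n)) : Prop :=
  IsEmb p π E ∧ IsRightmost π E

/-- Membership in `EZ^{p,π}`: `S` is a nonempty set of rightmost embeddings of `p` in `π`
whose zero sets have empty intersection (every position is nonzero in some member). -/
def EZmem (p : PermPat) {n : ℕ} (π : Equiv.Perm (Fin n)) (S : Finset (Finset (Fin n))) : Prop :=
  S.Nonempty ∧ (∀ E ∈ S, EhatMem p π E) ∧ ∀ j : Fin n, ∃ E ∈ S, j ∈ E

/-- The sum `∑_{S ∈ EZ^{p,π}} (-1)^{|S|}`. -/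
noncomputable def EZsum (p : PermPat) {n : ℕ} (π : Equiv.Perm (Fin n)) : ℤ :=
  ∑ S ∈ Finset.univ.filter (fun S : Finset (Finset (Fin n)) => EZmem p π S), (-1 : ℤ) ^ S.card

/-! ## The adjacency decomposition and the posets `P(η)`, `A^{σ,π}` -/

/-- `π̂`, the adjacency decomposition of `π`, as a tuple of permutations. -/
noncomputable def Phat {n : ℕ} (π : Equiv.Perm (Fin n)) : Fin (numBlocks π) → PermPat :=
  fun i => patternOf π (blockF π i.val)

/-- `η̂`, the decomposition of an embedding (with nonzero positions `E`) along the
adjacencies of `π`. -/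
noncomputable def etaHat {n : ℕ} (π : Equiv.Perm (Fin n)) (E : Finset (Fin n)) :
    Fin (numBlocks π) → PermPat :=
  fun i => patternOf π (E.filter fun j => blockIdx π j = i.val)

/-- The product poset `P(η) = [η̂_1,π̂_1] × ⋯ × [η̂_t,π̂_t]`, as a subset of the product of
copies of the pattern poset indexed by the adjacencies of `π`. -/
noncomputable def Pemb {n : ℕ} (π : Equiv.Perm (Fin n)) (E : Finset (Fin n)) :
    Set (Fin (numBlocks π) → PermPat) :=
  Set.Icc (etaHat π E) (Phat π)

/-- `P(η)°`: the product poset `P(η)` with its bottom element `η̂` and top element `π̂`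
removed. -/
noncomputable def PembO {n : ℕ} (π : Equiv.Perm (Fin n)) (E : Finset (Fin n)) :
    Set (Fin (numBlocks π) → PermPat) :=
  Pemb π E \ {etaHat π E, Phat π}

/-- `A^{p,π} = ⋃_{η ∈ Ê^{p,π}} P(η)°`. -/
noncomputable def Aspace (p : PermPat) {n : ℕ} (π : Equiv.Perm (Fin n)) :
    Set (Fin (numBlocks π) → PermPat) :=
  ⋃ E ∈ {E : Finset (Fin n) | EhatMem p π E}, PembO π E

/-! ## Sundry notions -/

/-- The number of descents of a permutation. -/
noncomputable def desNum {n : ℕ} (π : Equiv.Perm (Fin n)) : ℕ :=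
  (Finset.univ.filter fun j : Fin n => ∃ h : j.val + 1 < n, π ⟨j.val + 1, h⟩ < π j).card

/-- The direct sum of two permutations. -/
def dsum {a b : ℕ} (σ : Equiv.Perm (Fin a)) (τ : Equiv.Perm (Fin b)) :
    Equiv.Perm (Fin (a + b)) :=
  finSumFinEquiv.symm.trans ((Equiv.sumCongr σ τ).trans finSumFinEquiv)

/-- A permutation is indecomposable if it is nonempty and not the direct sum of two
nonempty permutations. -/
def Indecomp (p : PermPat) : Prop :=
  0 < p.1 ∧ ¬ ∃ (a b : ℕ) (σ : Equiv.Perm (Fin a)) (τ : Equiv.Perm (Fin b)),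
    0 < a ∧ 0 < b ∧ p = ⟨a + b, dsum σ τ⟩

/-- `dpow lam m = lam ⊕ ⋯ ⊕ lam` (`m` summands). -/
def dpow {l : ℕ} (lam : Equiv.Perm (Fin l)) : (m : ℕ) → Equiv.Perm (Fin (m * l))
  | 0 => (finCongr (Nat.zero_mul l).symm).permCongr 1
  | m + 1 => (finCongr (by ring : m * l + l = (m + 1) * l)).permCongr (dsum (dpow lam m) lam)

/-- Direct sum of permutations, on `PermPat`. -/
def dsumP (p q : PermPat) : PermPat := ⟨p.1 + q.1, dsum p.2 q.2⟩

/-- The direct sum of a list of permutations. -/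
def dsumList : List PermPat → PermPat
  | [] => ⟨0, 1⟩
  | p :: L => dsumP p (dsumList L)

/-- The increasing permutation `ι_n = 12⋯n`. -/
def iota (n : ℕ) : PermPat := ⟨n, 1⟩

/-!
Write `EZ(λ,π) = ∑_{S ∈ EZ^{λ,π}} (-1)^|S|`. Since `μ(σ,π) = -∑_{σ ≤ λ < π} μ(σ,λ)` and
`EZ(π,π) = -1`, the formula is equivalent to
`∑_{σ ≤ λ ≤ π} μ(σ,λ) EZ(λ,π) = -(-1)^{|π|-|σ|} NE(σ,π)`.

Inclusion–exclusion over the set `T` of positions missed by a family of rightmost embeddings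
gives `EZ(λ,π) = -∑_T (-1)^|T| [λ ≤ ρ_T]`, where `ρ_T = patternAvoiding π T` is the pattern left
in `π` after deleting, in each adjacency, every position up to the last one in `T`: a rightmost
embedding avoiding `T` avoids this closure of `T`, and conversely an embedding inside its
complement slides to a rightmost one. Exchanging the sums, `∑_{σ ≤ λ ≤ ρ} μ(σ,λ) = [σ = ρ]` leaves
`-∑_{ρ_T = σ} (-1)^|T|`. Grouping the sets `T` by their closure, only closures made of first
letters of adjacencies survive, and their complements are exactly the normal embeddings of `σ`.
-/

open Finset

namespace PermPat

lemma eq_of_le_of_length_le {p q : PermPat} (h : p ≤ q) (hlen : q.1 ≤ p.1) : p = q := by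
  obtain ⟨a, σ⟩ := p
  obtain ⟨b, τ⟩ := q
  obtain rfl : a = b := le_antisymm h.len_le hlen
  obtain ⟨f, hf⟩ := h
  have hf_id : ∀ i, f i = i := f.strictMono.fin_apply_eq
  refine patLe_antisymm ⟨f, hf⟩ ⟨f, fun i j => ?_⟩
  simp only [hf_id, hf i j]

lemma eq_of_lt_iff {a b : ℕ} (h : a = b) {p : Equiv.Perm (Fin a)}
    {q : Equiv.Perm (Fin b)} (hpq : ∀ i j, p i < p j ↔ q (Fin.cast h i) < q (Fin.cast h j)) :
    (⟨a, p⟩ : PermPat) = ⟨b, q⟩ :=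
  eq_of_le_of_length_le ⟨(Fin.castOrderIso h).toOrderEmbedding, hpq⟩ h.ge

lemma length_lt_of_lt {p q : PermPat} (h : p < q) : p.1 < q.1 :=
  lt_of_le_of_ne h.le.len_le fun he => h.ne (eq_of_le_of_length_le h.le he.ge)

def lengthLT (N : ℕ) : Finset PermPat := (range N).sigma fun _ => univ

@[simp]
lemma mem_lengthLT {N : ℕ} {x : PermPat} : x ∈ lengthLT N ↔ x.1 < N := by
  simp [lengthLT]

lemma sum_range_sum_perm {M : Type*} [AddCommMonoid M] (N : ℕ) (f : PermPat → M) :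
    ∑ m ∈ range N, ∑ z : Equiv.Perm (Fin m), f ⟨m, z⟩ = ∑ x ∈ lengthLT N, f x :=
  (sum_sigma _ _ _).symm

noncomputable instance : LocallyFiniteOrder PermPat :=
  LocallyFiniteOrder.ofIcc PermPat (fun a b => {x ∈ lengthLT (b.1 + 1) | a ≤ x ∧ x ≤ b})
    fun a b x => by simpa using fun _ (hxb : x ≤ b) => Nat.lt_succ_of_le (PatLe.len_le hxb)

lemma filter_lengthLT_eq_Ico {p q : PermPat} {N : ℕ} (hN : q.1 ≤ N) :
    {x ∈ lengthLT N | p ≤ x ∧ x < q} = Ico p q := by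
  ext x
  simpa using fun _ hxq => (length_lt_of_lt hxq).trans_le hN

lemma sum_range_sum_perm_ite_Ico {M : Type*} [AddCommMonoid M] (p q : PermPat)
    (f : PermPat → M) :
    ∑ m ∈ range (q.1 + 1), ∑ z : Equiv.Perm (Fin m),
      (if PatLe p ⟨m, z⟩ ∧ PatLe ⟨m, z⟩ q ∧ (⟨m, z⟩ : PermPat) ≠ q then f ⟨m, z⟩ else 0) =
      ∑ x ∈ Ico p q, f x := by
  rw [sum_range_sum_perm (q.1 + 1) fun x => if PatLe p x ∧ PatLe x q ∧ x ≠ q then f x else 0,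
    ← sum_filter, ← filter_lengthLT_eq_Ico (Nat.le_succ _)]
  simp only [← le_def, ← lt_iff_le_and_ne]

end PermPat

open PermPat

lemma permMu_self (p : PermPat) : permMu p p = 1 := by
  rw [permMu]; simp

lemma permMu_eq_neg_sum_Ico {p q : PermPat} (h : p < q) :
    permMu p q = -∑ x ∈ Ico p q, permMu p x := by
  rw [permMu, if_neg h.ne, if_pos (show PatLe p q from h.le), Fin.sum_univ_eq_sum_range
    (fun m => ∑ z : Equiv.Perm (Fin m), if PatLe p ⟨m, z⟩ ∧ PatLe ⟨m, z⟩ q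
      then permMu p ⟨m, z⟩ else 0),
    sum_range_sum_perm q.1 fun x => if PatLe p x ∧ PatLe x q then permMu p x else 0, ← sum_filter,
    ← filter_lengthLT_eq_Ico le_rfl]
  congr 2
  ext x
  simp only [mem_filter, mem_lengthLT, and_congr_right_iff]
  intro hx
  exact ⟨fun h => ⟨h.1, lt_of_le_of_ne h.2 fun he => hx.ne (congrArg Sigma.fst he)⟩,
    fun h => ⟨h.1, h.2.le⟩⟩

lemma sum_Icc_permMu (p q : PermPat) :
    ∑ x ∈ Icc p q, permMu p x = if p = q then 1 else 0 := by
  split_ifs with hpq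
  · subst hpq
    simp [permMu_self]
  · by_cases hle : p ≤ q
    · rw [Icc_eq_cons_Ico hle, sum_cons, permMu_eq_neg_sum_Ico (lt_of_le_of_ne hle hpq),
        neg_add_cancel]
    · rw [Icc_eq_empty hle, sum_empty]

lemma stdize_lt_iff {m n : ℕ} {v : Fin m → Fin n} (hv : Function.Injective v) (i j : Fin m) :
    stdize v hv i < stdize v hv j ↔ v i < v j :=
  (monoEquivOfFin _ _).symm.lt_iff_lt

section PatternOf

variable {n : ℕ} (π : Equiv.Perm (Fin n))

lemma patternOf_lt_iff (E : Finset (Fin n)) (i j : Fin #E) :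
    (patternOf π E).2 i < (patternOf π E).2 j ↔
      π (E.orderEmbOfFin rfl i) < π (E.orderEmbOfFin rfl j) :=
  stdize_lt_iff _ i j

lemma patternOf_eq_of_strictMono {m : ℕ} (z : Equiv.Perm (Fin m)) {g : Fin m → Fin n}
    (hg : StrictMono g) {E : Finset (Fin n)} (hE : ∀ x, x ∈ E ↔ ∃ i, g i = x)
    (hz : ∀ i j, z i < z j ↔ π (g i) < π (g j)) : patternOf π E = ⟨m, z⟩ := by
  have hE' : E = univ.image g := by ext x; simp [hE x]
  have hcard : #E = m := by rw [hE', card_image_of_injective _ hg.injective, card_fin]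
  have hemb : ∀ i, E.orderEmbOfFin rfl i = g (Fin.cast hcard i) := by
    refine congrFun (orderEmbOfFin_unique rfl (fun i => (hE _).2 ⟨_, rfl⟩) ?_).symm
    exact hg.comp (Fin.cast_strictMono hcard)
  exact eq_of_lt_iff hcard fun i j => (patternOf_lt_iff π E i j).trans <| by
    rw [hemb, hemb, hz]

lemma patternOf_univ : patternOf π univ = ⟨n, π⟩ :=
  patternOf_eq_of_strictMono π π strictMono_id (by simp) fun _ _ => Iff.rfl

lemma le_patternOf_iff {p : PermPat} {F : Finset (Fin n)} :
    p ≤ patternOf π F ↔ ∃ E ⊆ F, patternOf π E = p := by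
  constructor
  · obtain ⟨m, z⟩ := p
    rintro ⟨f, hf⟩
    refine ⟨univ.image (F.orderEmbOfFin rfl ∘ f), fun x hx => ?_, ?_⟩
    · obtain ⟨i, -, rfl⟩ := mem_image.1 hx
      exact orderEmbOfFin_mem F rfl _
    · refine patternOf_eq_of_strictMono π z ((F.orderEmbOfFin rfl).strictMono.comp
        f.strictMono) (by simp) fun i j => ?_
      exact (hf i j).trans (patternOf_lt_iff π F _ _)
  · rintro ⟨E, hEF, rfl⟩
    let f : Fin #E → Fin #F := fun i =>
      (F.orderIsoOfFin rfl).symm ⟨E.orderEmbOfFin rfl i, hEF (orderEmbOfFin_mem E rfl i)⟩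
    have hf : ∀ i, F.orderEmbOfFin rfl (f i) = E.orderEmbOfFin rfl i := fun i => by
      simp [f, ← coe_orderIsoOfFin_apply]
    have hmono : StrictMono f := fun i j hij => by
      simpa [← (F.orderEmbOfFin rfl).lt_iff_lt, hf] using hij
    refine ⟨OrderEmbedding.ofStrictMono f hmono, fun (i j : Fin #E) => ?_⟩
    rw [patternOf_lt_iff, ← hf, ← hf]
    exact (patternOf_lt_iff π F _ _).symm

lemma patternOf_le (E : Finset (Fin n)) : patternOf π E ≤ ⟨n, π⟩ :=
  patternOf_univ π ▸ (le_patternOf_iff π).2 ⟨E, subset_univ E, rfl⟩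

lemma patternOf_map_eq (E : Finset (Fin n)) (τ : Equiv.Perm (Fin n))
    (hpos : ∀ x ∈ E, ∀ y ∈ E, τ x < τ y ↔ x < y)
    (hval : ∀ x ∈ E, ∀ y ∈ E, π (τ x) < π (τ y) ↔ π x < π y) :
    patternOf π (E.map τ.toEmbedding) = patternOf π E := by
  have hmem := orderEmbOfFin_mem E rfl
  refine patternOf_eq_of_strictMono π _ (g := τ ∘ E.orderEmbOfFin rfl)
    (fun i j hij => (hpos _ (hmem i) _ (hmem j)).2 ((E.orderEmbOfFin rfl).strictMono hij))
    (fun x => ?_) fun i j => ?_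
  · simp only [mem_map_equiv, Function.comp_apply, ← Equiv.eq_symm_apply]
    rw [← Finset.mem_coe, ← range_orderEmbOfFin E rfl, Set.mem_range]
  · exact (patternOf_lt_iff π E i j).trans (hval _ (hmem i) _ (hmem j)).symm

end PatternOf

section BlockClosure

variable {α ι : Type*} [LinearOrder α] [Fintype α] (β : α → ι)

noncomputable def blockClosure (T : Finset α) : Finset α := {i | ∃ j ∈ T, β i = β j ∧ i ≤ j}

noncomputable def blockHeads : Finset α := {j | ∀ i, β i = β j → j ≤ i}

variable {β}

@[simp]
lemma mem_blockClosure {T : Finset α} {i : α} :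
    i ∈ blockClosure β T ↔ ∃ j ∈ T, β i = β j ∧ i ≤ j := by
  simp [blockClosure]

@[simp]
lemma mem_blockHeads {j : α} : j ∈ blockHeads β ↔ ∀ i, β i = β j → j ≤ i := by
  simp [blockHeads]

lemma subset_blockClosure (T : Finset α) : T ⊆ blockClosure β T :=
  fun j hj => mem_blockClosure.2 ⟨j, hj, rfl, le_rfl⟩

lemma mem_blockClosure_of_le {T : Finset α} {i j : α} (hj : j ∈ blockClosure β T)
    (hij : β i = β j) (hle : i ≤ j) : i ∈ blockClosure β T := by
  obtain ⟨t, ht, hjt, hle'⟩ := mem_blockClosure.1 hj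
  exact mem_blockClosure.2 ⟨t, ht, hij.trans hjt, hle.trans hle'⟩

lemma blockClosure_subset_iff {T C : Finset α} :
    blockClosure β T ⊆ blockClosure β C ↔ T ⊆ blockClosure β C :=
  ⟨(subset_blockClosure T).trans, fun h _ hi =>
    let ⟨_, hj, hij, hle⟩ := mem_blockClosure.1 hi; mem_blockClosure_of_le (h hj) hij hle⟩

lemma blockClosure_eq_iff_of_subset_blockHeads {T C : Finset α} (hC : C ⊆ blockHeads β) :
    blockClosure β T = C ↔ T = C := by
  have hCC : blockClosure β C = C := by
    refine (subset_blockClosure C).antisymm' fun i hi => ?_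
    obtain ⟨j, hj, hij, hle⟩ := mem_blockClosure.1 hi
    rwa [le_antisymm hle (mem_blockHeads.1 (hC hj) i hij)]
  refine ⟨fun h => ?_, fun h => h ▸ hCC⟩
  refine (h ▸ subset_blockClosure T).antisymm fun c hc => ?_
  obtain ⟨t, ht, hct, hle⟩ := mem_blockClosure.1 (h.symm ▸ hc : c ∈ blockClosure β T)
  have htC : t ∈ C := h ▸ subset_blockClosure T ht
  rwa [le_antisymm hle (mem_blockHeads.1 (hC htC) c hct)]

lemma blockClosure_insert_of_mem {T : Finset α} {x : α} (hx : x ∈ blockClosure β T) :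
    blockClosure β (insert x T) = blockClosure β T :=
  (blockClosure_subset_iff.2 (insert_subset hx (subset_blockClosure T))).antisymm
    (blockClosure_subset_iff.2 ((subset_insert x T).trans (subset_blockClosure _)))

lemma blockClosure_erase_of_lt {T : Finset α} {x y : α} (hy : y ∈ blockClosure β T)
    (hxy : β x = β y) (hlt : x < y) : blockClosure β (T.erase x) = blockClosure β T := by
  refine (blockClosure_subset_iff.2 ((erase_subset x T).trans (subset_blockClosure T))).antisymm
    (blockClosure_subset_iff.2 fun t ht => ?_)
  obtain rfl | htx := eq_or_ne t x
  · obtain ⟨t', ht', hyt', hle⟩ := mem_blockClosure.1 hy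
    exact mem_blockClosure.2 ⟨t', mem_erase.2 ⟨(hlt.trans_le hle).ne', ht'⟩, hxy.trans hyt',
      hlt.le.trans hle⟩
  · exact subset_blockClosure _ (mem_erase.2 ⟨htx, ht⟩)

/-- Only sets of block heads survive: any other fibre of `blockClosure` is empty or is paired
off by toggling an element that lies below another one of its block. -/
lemma sum_neg_one_pow_fiber_blockClosure (C : Finset α) :
    ∑ T with blockClosure β T = C, (-1 : ℤ) ^ #T = if C ⊆ blockHeads β then (-1) ^ #C else 0 := by
  split_ifs with hC
  · simp [blockClosure_eq_iff_of_subset_blockHeads hC, filter_eq']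
  by_cases hfib : ∃ T₀, blockClosure β T₀ = C
  swap
  · exact sum_eq_zero fun T hT => absurd ⟨T, (mem_filter.1 hT).2⟩ hfib
  obtain ⟨T₀, rfl⟩ := hfib
  obtain ⟨x, hx, y, hy, hxy, hlt⟩ :
      ∃ x ∈ blockClosure β T₀, ∃ y ∈ blockClosure β T₀, β x = β y ∧ x < y := by
    obtain ⟨c, hc, hnh⟩ := not_subset.1 hC
    obtain ⟨i, hic, hlt⟩ : ∃ i, β i = β c ∧ i < c := by simpa using hnh
    exact ⟨i, mem_blockClosure_of_le hc hic hlt.le, c, hc, hic, hlt⟩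
  refine sum_involution (fun T _ => if x ∈ T then T.erase x else insert x T) (fun T _ => ?_)
    (fun T _ _ => ?_) (fun T hT => ?_) fun T _ => ?_
  · split_ifs with hxT
    · rw [← card_erase_add_one hxT, pow_succ]; ring
    · rw [card_insert_of_notMem hxT, pow_succ]; ring
  · split_ifs with hxT
    · exact fun h => notMem_erase x T (by rwa [h])
    · exact fun h => hxT (h ▸ mem_insert_self x T)
  · rw [mem_filter] at hT ⊢
    refine ⟨mem_univ _, ?_⟩
    split_ifs
    · rw [blockClosure_erase_of_lt (hT.2 ▸ hy) hxy hlt, hT.2]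
    · rw [blockClosure_insert_of_mem (hT.2 ▸ hx), hT.2]
  · by_cases hxT : x ∈ T <;> simp [hxT]

lemma sum_neg_one_pow_filter_blockClosure (P : Finset α → Prop) :
    ∑ T with P (blockClosure β T), (-1 : ℤ) ^ #T =
      ∑ C with C ⊆ blockHeads β ∧ P C, (-1 : ℤ) ^ #C := by
  rw [← sum_fiberwise _ (blockClosure β), sum_filter]
  refine sum_congr rfl fun C _ => ?_
  rw [filter_filter]
  by_cases hP : P C
  · rw [filter_congr fun T _ => and_iff_right_of_imp fun h => h ▸ hP,
      sum_neg_one_pow_fiber_blockClosure]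
    simp [hP]
  · rw [filter_false_of_mem fun T _ (h : P (blockClosure β T) ∧ blockClosure β T = C) =>
      hP (h.2 ▸ h.1), sum_empty, if_neg fun h => hP h.2]

end BlockClosure

section Adjacencies

variable {n : ℕ} (π : Equiv.Perm (Fin n))

lemma blockIdx_mono {i j : Fin n} (hij : i ≤ j) : blockIdx π i ≤ blockIdx π j :=
  Nat.sub_le_sub_right (card_le_card fun m hm => by
    simp only [mem_filter] at hm ⊢; exact ⟨hm.1, hm.2.1, hm.2.2.trans hij⟩) 1

lemma blockIdx_eq_of_le_of_le {i j k : Fin n} (hij : i ≤ j) (hjk : j ≤ k)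
    (hik : blockIdx π i = blockIdx π k) : blockIdx π j = blockIdx π i :=
  le_antisymm (hik ▸ blockIdx_mono π hjk) (blockIdx_mono π hij)

lemma blockIdx_eq_iff_linked {i j : Fin n} (hij : j.val = i.val + 1) :
    blockIdx π i = blockIdx π j ↔ Linked π j := by
  let A : Fin n → Finset (Fin n) := fun x => univ.filter fun m => ¬ Linked π m ∧ m ≤ x
  have hji : ¬ j ≤ i := fun h => by rw [Fin.le_def] at h; omega
  have hle : ∀ m : Fin n, m ≠ j → (m ≤ j ↔ m ≤ i) := fun m hm => by
    simp only [ne_eq, Fin.ext_iff, Fin.le_def] at hm ⊢; omega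
  have hA : A j = if Linked π j then A i else insert j (A i) := by
    ext m
    obtain rfl | hm := eq_or_ne m j
    · split_ifs with hL <;> simp [A, hL, hji]
    · split_ifs <;> simp [A, hm, hle m hm]
  have hjA : j ∉ A i := by simp [A, hji]
  have hpos : 0 < #(A i) := card_pos.2
    ⟨⟨0, i.pos⟩, by simpa [A, Linked] using Fin.le_def.2 (Nat.zero_le i.val)⟩
  change #(A i) - 1 = #(A j) - 1 ↔ _
  rw [hA]
  split_ifs with hL
  · simp [hL]
  · rw [card_insert_of_notMem hjA]; simp only [hL, iff_false]; omega

lemma mem_blockHeads_blockIdx {j : Fin n} : j ∈ blockHeads (blockIdx π) ↔ ¬ Linked π j := by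
  rw [mem_blockHeads]
  constructor
  · intro hmin hL
    have hprev : j.val = (prevPos j).val + 1 := by simp only [prevPos]; have := hL.1; omega
    have := hmin _ ((blockIdx_eq_iff_linked π hprev).2 hL)
    rw [Fin.le_def] at this
    omega
  · intro hL i hij
    by_contra! hlt
    have hprev : j.val = (prevPos j).val + 1 := by
      simp only [prevPos]; rw [Fin.lt_def] at hlt; omega
    have hi : i ≤ prevPos j := by simp only [Fin.le_def, prevPos]; rw [Fin.lt_def] at hlt; omega
    have hp : prevPos j ≤ j := by simp only [Fin.le_def, prevPos]; omega
    exact hL ((blockIdx_eq_iff_linked π hprev).1 ((blockIdx_eq_of_le_of_le π hi hp hij).trans hij))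

lemma exists_linked_of_not_isRightmost {E : Finset (Fin n)} (h : ¬ IsRightmost π E) :
    ∃ i j : Fin n, j.val = i.val + 1 ∧ i ∈ E ∧ j ∉ E ∧ Linked π j := by
  simp only [IsRightmost, not_forall] at h
  obtain ⟨i, k, hik, hle, hi, hk⟩ := h
  let S : Finset (Fin n) := {x ∈ Icc i k | x ∈ E}
  have hS : S.Nonempty := ⟨i, by simp [S, hle, hi]⟩
  obtain ⟨⟨hii', hi'k⟩, hi'⟩ : (i ≤ S.max' hS ∧ S.max' hS ≤ k) ∧ S.max' hS ∈ E := by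
    simpa [S] using S.max'_mem hS
  set i' := S.max' hS
  have hi'k' : i'.val < k.val := Fin.lt_def.1 (lt_of_le_of_ne hi'k fun h => hk (h ▸ hi'))
  let j : Fin n := ⟨i'.val + 1, by omega⟩
  have hj_le : j ≤ k := Fin.le_def.2 (by simp only [j]; omega)
  have hi'j : i' ≤ j := Fin.le_def.2 (by simp only [j]; omega)
  refine ⟨i', j, rfl, hi', fun hj => ?_, ?_⟩
  · have := Fin.le_def.1 (S.le_max' j (by simp [S, hj, hj_le, hii'.trans hi'j]))
    simp only [j] at this
    omega
  · rw [← blockIdx_eq_iff_linked π rfl, blockIdx_eq_of_le_of_le π hii' (hi'j.trans hj_le) hik,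
      blockIdx_eq_of_le_of_le π (hii'.trans hi'j) hj_le hik]

lemma swap_lt_swap_iff_of_adjacent {a b x y : Fin n}
    (hab : b.val = a.val + 1 ∨ a.val = b.val + 1) (hx : x ≠ b) (hy : y ≠ b) :
    Equiv.swap a b x < Equiv.swap a b y ↔ x < y := by
  rw [Equiv.swap_apply_def, Equiv.swap_apply_def]
  split_ifs <;> simp only [ne_eq, Fin.ext_iff, Fin.lt_def] at * <;> omega

lemma patternOf_map_swap {E : Finset (Fin n)} {i j : Fin n} (hij : j.val = i.val + 1)
    (hj : j ∉ E) (hL : Linked π j) :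
    patternOf π (E.map (Equiv.swap i j).toEmbedding) = patternOf π E := by
  have hprev : prevPos j = i := Fin.ext (by simp [prevPos]; omega)
  have hval : (π j).val = (π i).val + 1 ∨ (π i).val = (π j).val + 1 := by
    rcases hL.2 with h | h <;> rw [hprev] at h <;> omega
  refine patternOf_map_eq π E _ (fun x hx y hy => swap_lt_swap_iff_of_adjacent (Or.inl hij)
    (ne_of_mem_of_not_mem hx hj) (ne_of_mem_of_not_mem hy hj)) fun x hx y hy => ?_
  rw [π.injective.map_swap, π.injective.map_swap]
  exact swap_lt_swap_iff_of_adjacent hval (π.injective.ne (ne_of_mem_of_not_mem hx hj))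
    (π.injective.ne (ne_of_mem_of_not_mem hy hj))

end Adjacencies

section Rightmost

variable {n : ℕ} (π : Equiv.Perm (Fin n))

/-- Sliding a letter one step to the right inside its adjacency keeps the pattern; repeating this
makes any embedding rightmost. -/
lemma exists_isRightmost_subset {U E : Finset (Fin n)} (hU : IsRightmost π U) (hEU : E ⊆ U) :
    ∃ E' ⊆ U, IsRightmost π E' ∧ patternOf π E' = patternOf π E := by
  induction hN : ∑ x ∈ E, (n - x.val) using Nat.strong_induction_on generalizing E with
  | _ N ih =>
  by_cases hE : IsRightmost π E
  · exact ⟨E, hEU, hE, rfl⟩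
  obtain ⟨i, j, hij, hi, hj, hL⟩ := exists_linked_of_not_isRightmost π hE
  have hswap : ∀ x ∈ E, Equiv.swap i j x = if x = i then j else x := fun x hx => by
    split_ifs with hxi
    · rw [hxi, Equiv.swap_apply_left]
    · exact Equiv.swap_apply_of_ne_of_ne hxi (ne_of_mem_of_not_mem hx hj)
  have hlt : ∑ x ∈ E.map (Equiv.swap i j).toEmbedding, (n - x.val) < N := by
    rw [sum_map, ← hN]
    refine sum_lt_sum (fun x hx => ?_) ⟨i, hi, ?_⟩
    · rw [Equiv.coe_toEmbedding, hswap x hx]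
      split_ifs with hxi
      · subst hxi; omega
      · rfl
    · simp only [Equiv.coe_toEmbedding, Equiv.swap_apply_left]
      have := j.isLt
      omega
  have hsub : E.map (Equiv.swap i j).toEmbedding ⊆ U := by
    intro x hx
    obtain ⟨y, hy, rfl⟩ := mem_map.1 hx
    rw [Equiv.coe_toEmbedding, hswap y hy]
    split_ifs with hyi
    · exact hU i j ((blockIdx_eq_iff_linked π hij).2 hL) (Fin.le_def.2 (by omega)) (hEU hi)
    · exact hEU hy
  obtain ⟨E', hE'U, hE', hpat⟩ := ih _ hlt hsub rfl
  exact ⟨E', hE'U, hE', hpat.trans (patternOf_map_swap π hij hj hL)⟩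

noncomputable def patternAvoiding (T : Finset (Fin n)) : PermPat :=
  patternOf π (blockClosure (blockIdx π) T)ᶜ

lemma isRightmost_compl_blockClosure (T : Finset (Fin n)) :
    IsRightmost π (blockClosure (blockIdx π) T)ᶜ := fun _ _ hij hle hi => by
  simp only [mem_compl] at hi ⊢
  exact fun hj => hi (mem_blockClosure_of_le hj hij hle)

lemma exists_ehatMem_disjoint_iff {p : PermPat} {T : Finset (Fin n)} :
    (∃ E, EhatMem p π E ∧ Disjoint E T) ↔ p ≤ patternAvoiding π T := by
  constructor
  · rintro ⟨E, ⟨rfl, hE⟩, hdisj⟩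
    refine (le_patternOf_iff π).2 ⟨E, fun x hx => mem_compl.2 fun hcl => ?_, rfl⟩
    obtain ⟨t, ht, hxt, hle⟩ := mem_blockClosure.1 hcl
    exact disjoint_left.1 hdisj (hE x t hxt hle hx) ht
  · intro hp
    obtain ⟨E, hEU, rfl⟩ := (le_patternOf_iff π).1 hp
    obtain ⟨E', hE'U, hE', hpat⟩ :=
      exists_isRightmost_subset π (isRightmost_compl_blockClosure π T) hEU
    exact ⟨E', ⟨hpat, hE'⟩, disjoint_left.2 fun x hx hxT =>
      mem_compl.1 (hE'U hx) (subset_blockClosure T hxT)⟩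

end Rightmost

section InclusionExclusion

variable {α : Type*}

lemma sum_neg_one_pow_nonempty_powerset (A : Finset α) :
    ∑ S ∈ A.powerset with S.Nonempty, (-1 : ℤ) ^ #S = if A.Nonempty then -1 else 0 := by
  have h := sum_filter_add_sum_filter_not A.powerset Finset.Nonempty fun S => (-1 : ℤ) ^ #S
  have hempty : A.powerset.filter (¬ ·.Nonempty) = {∅} := by
    ext S
    simp only [mem_filter, mem_powerset, not_nonempty_iff_eq_empty, mem_singleton]
    exact ⟨And.right, fun h => ⟨h ▸ empty_subset A, h⟩⟩
  rw [hempty, sum_singleton, card_empty, pow_zero, sum_powerset_neg_one_pow_card] at h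
  by_cases hA : A.Nonempty
  · rw [if_neg (nonempty_iff_ne_empty.1 hA)] at h
    rw [if_pos hA]
    linarith
  · rw [if_pos (not_nonempty_iff_eq_empty.1 hA)] at h
    rw [if_neg hA]
    linarith

variable [Fintype α]

lemma sum_neg_one_pow_disjoint_all (S : Finset (Finset α)) :
    ∑ T with ∀ E ∈ S, Disjoint E T, (-1 : ℤ) ^ #T = if ∀ a, ∃ E ∈ S, a ∈ E then 1 else 0 := by
  have hfilter : univ.filter (fun T => ∀ E ∈ S, Disjoint E T) =
      (univ.filter fun a => ∀ E ∈ S, a ∉ E).powerset := by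
    ext T
    simp only [mem_filter, mem_univ, true_and, mem_powerset, subset_iff, disjoint_right]
    exact ⟨fun h _ ha E hE => h E hE ha, fun h E hE _ ha => h ha E hE⟩
  rw [hfilter, sum_powerset_neg_one_pow_card]
  simp [eq_empty_iff_forall_notMem]

/-- Inclusion–exclusion over the points left uncovered by a subfamily. -/
lemma sum_neg_one_pow_covering (P : Finset α → Prop) :
    ∑ S : Finset (Finset α) with S.Nonempty ∧ (∀ E ∈ S, P E) ∧ ∀ a, ∃ E ∈ S, a ∈ E,
        (-1 : ℤ) ^ #S =
      -∑ T with ∃ E, P E ∧ Disjoint E T, (-1 : ℤ) ^ #T := by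
  let 𝓔 : Finset (Finset α) := {E | P E}
  calc _ = ∑ S ∈ 𝓔.powerset with S.Nonempty,
          ∑ T with ∀ E ∈ S, Disjoint E T, (-1 : ℤ) ^ #S * (-1) ^ #T := by
        simp_rw [← mul_sum, sum_neg_one_pow_disjoint_all, mul_ite, mul_one, mul_zero,
          ← sum_filter, filter_filter]
        refine sum_congr (ext fun S => ?_) fun _ _ => rfl
        simp [𝓔, subset_iff, and_left_comm]
    _ = ∑ T, ∑ S ∈ {E ∈ 𝓔 | Disjoint E T}.powerset with S.Nonempty,
          (-1 : ℤ) ^ #S * (-1) ^ #T := by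
        refine sum_comm' fun S T => ?_
        simp only [mem_filter, mem_powerset, mem_univ, true_and, subset_iff]
        grind
    _ = _ := by
        simp_rw [← sum_mul, sum_neg_one_pow_nonempty_powerset, ite_mul, neg_one_mul, zero_mul,
          ← sum_neg_distrib, ← sum_filter]
        refine sum_congr (ext fun T => ?_) fun _ _ => rfl
        simp [𝓔, Finset.Nonempty]

end InclusionExclusion

section TwoTermFormula

variable {n : ℕ} (π : Equiv.Perm (Fin n))

lemma EZsum_eq (p : PermPat) :
    EZsum p π = -∑ T with p ≤ patternAvoiding π T, (-1 : ℤ) ^ #T := by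
  simp_rw [← exists_ehatMem_disjoint_iff]
  unfold EZsum EZmem
  convert sum_neg_one_pow_covering (EhatMem p π)

lemma EZsum_self : EZsum ⟨n, π⟩ π = -1 := by
  have hT : ∀ T, ⟨n, π⟩ ≤ patternAvoiding π T ↔ T = ∅ := fun T => by
    refine ⟨fun h => ?_, fun h => ?_⟩
    · have hlen : n ≤ n - #(blockClosure (blockIdx π) T) := by
        simpa [patternAvoiding, patternOf, card_compl] using PatLe.len_le h
      have hcl : #(blockClosure (blockIdx π) T) ≤ n := by
        simpa using card_le_univ (blockClosure (blockIdx π) T)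
      have h0 : blockClosure (blockIdx π) T = ∅ := card_eq_zero.1 (by omega)
      exact subset_empty.1 (h0 ▸ subset_blockClosure T)
    · subst h
      simp [patternAvoiding, blockClosure, patternOf_univ]
  simp [EZsum_eq, hT, filter_eq']

lemma NE_eq_card (p : PermPat) :
    NE p π = #{C | C ⊆ blockHeads (blockIdx π) ∧ patternOf π Cᶜ = p} := by
  have hset : {E | IsEmb p π E ∧ IsNormal π E} =
      ↑(univ.filter fun E : Finset (Fin n) => IsEmb p π E ∧ IsNormal π E) := by
    simp
  rw [NE, hset, Set.ncard_coe_finset]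
  refine card_nbij' compl compl (fun E hE => ?_) (fun C hC => ?_) (fun E _ => compl_compl E)
    fun C _ => compl_compl C
  · rw [mem_coe, Finset.mem_filter] at hE
    rw [mem_coe, Finset.mem_filter, compl_compl]
    exact ⟨mem_univ _, fun j hj => (mem_blockHeads_blockIdx π).2 fun hL =>
      mem_compl.1 hj (hE.2.2 j hL), hE.2.1⟩
  · rw [mem_coe, Finset.mem_filter] at hC
    rw [mem_coe, Finset.mem_filter]
    refine ⟨mem_univ _, hC.2.2, fun j hL => ?_⟩
    by_contra hj
    exact (mem_blockHeads_blockIdx π).1 (hC.2.1 (notMem_compl.1 hj)) hL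

lemma sum_neg_one_pow_patternAvoiding_eq (p : PermPat) :
    ∑ T with patternAvoiding π T = p, (-1 : ℤ) ^ #T = (-1) ^ (n - p.1) * NE p π := by
  calc _ = ∑ C with C ⊆ blockHeads (blockIdx π) ∧ patternOf π Cᶜ = p, (-1 : ℤ) ^ #C := by
        unfold patternAvoiding
        convert sum_neg_one_pow_filter_blockClosure (β := blockIdx π) fun C => patternOf π Cᶜ = p
    _ = ∑ C with C ⊆ blockHeads (blockIdx π) ∧ patternOf π Cᶜ = p, (-1 : ℤ) ^ (n - p.1) := by
        refine sum_congr rfl fun C hC => ?_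
        obtain ⟨-, rfl⟩ := (mem_filter.1 hC).2
        simp only [patternOf, card_compl, Fintype.card_fin]
        rw [Nat.sub_sub_self (by simpa using card_le_univ C)]
    _ = _ := by rw [sum_const, nsmul_eq_mul, mul_comm, NE_eq_card]

lemma sum_Icc_permMu_mul_EZsum (p : PermPat) :
    ∑ x ∈ Icc p ⟨n, π⟩, permMu p x * EZsum x π = -((-1) ^ (n - p.1) * NE p π) := by
  calc _ = -∑ x ∈ Icc p ⟨n, π⟩, ∑ T with x ≤ patternAvoiding π T, permMu p x * (-1) ^ #T := by
        simp only [EZsum_eq, mul_neg, mul_sum, sum_neg_distrib]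
    _ = -∑ T, ∑ x ∈ Icc p (patternAvoiding π T), permMu p x * (-1) ^ #T := by
        rw [sum_comm' fun x T => ?_]
        simp only [mem_Icc, mem_filter, mem_univ, true_and, and_true]
        exact ⟨fun h => ⟨h.1.1, h.2⟩, fun h => ⟨⟨h.1, h.2.trans (patternOf_le π _)⟩, h.2⟩⟩
    _ = -∑ T with patternAvoiding π T = p, (-1 : ℤ) ^ #T := by
        simp_rw [← sum_mul, sum_Icc_permMu, ite_mul, one_mul, zero_mul, ← sum_filter, eq_comm]
    _ = _ := by rw [sum_neg_one_pow_patternAvoiding_eq]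

end TwoTermFormula

/-- For permutations `σ ≤ π` in the pattern poset,
`μ(σ,π) = (−1)^{|π|−|σ|}·NE(σ,π) + Σ_{σ ≤ λ < π} μ(σ,λ)·Σ_{S ∈ EZ^{λ,π}} (−1)^{|S|}`.
The permutations `λ` with `σ ≤ λ < π` are enumerated by their length `m`
(any `λ < π` has length at most `n`). -/
theorem mobius_two_term_formula {k n : ℕ} (σ : Equiv.Perm (Fin k)) (π : Equiv.Perm (Fin n))
    (h : PatLe ⟨k, σ⟩ ⟨n, π⟩) :
    permMu ⟨k, σ⟩ ⟨n, π⟩ = (-1 : ℤ) ^ (n - k) * (NE ⟨k, σ⟩ π : ℤ) +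
      ∑ m ∈ Finset.range (n + 1), ∑ z : Equiv.Perm (Fin m),
        (if PatLe ⟨k, σ⟩ ⟨m, z⟩ ∧ PatLe ⟨m, z⟩ ⟨n, π⟩ ∧ (⟨m, z⟩ : PermPat) ≠ ⟨n, π⟩
         then permMu ⟨k, σ⟩ ⟨m, z⟩ * EZsum ⟨m, z⟩ π else 0) := by
  have hIcc := sum_Icc_permMu_mul_EZsum π ⟨k, σ⟩
  rw [Icc_eq_cons_Ico h, sum_cons, EZsum_self] at hIcc
  rw [sum_range_sum_perm_ite_Ico ⟨k, σ⟩ ⟨n, π⟩ fun x => permMu ⟨k, σ⟩ x * EZsum x π]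
  linarith
end

section
/- For every n ≥ 1, the sum over all permutations π of length n of the total number of letters of π lying in tails of adjacencies of π equals 2(n−1)·(n−1)!. Equivalently, the average total number of letters in the tails of adjacencies of a permutation of length n is 2(n−1)/n. -/
open scoped Classical

set_option maxHeartbeats 1000000

lemma card_perm_two {n : ℕ} (i k a b : Fin n) (hik : i ≠ k) (hab : a ≠ b) :
    (Finset.univ.filter fun π : Equiv.Perm (Fin n) => π i = a ∧ π k = b).card
      = (n - 2).factorial := by
  have hm : ∀ x : Fin n, x ∈ ({i, k} : Set (Fin n)) → x = i ∨ x = k := by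
    intro x hx; simpa using hx
  let e₀ : ({i, k} : Set (Fin n)) ≃ ({a, b} : Set (Fin n)) :=
    { toFun := fun x => if (x : Fin n) = i then ⟨a, by simp⟩ else ⟨b, by simp⟩
      invFun := fun y => if (y : Fin n) = a then ⟨i, by simp⟩ else ⟨k, by simp⟩
      left_inv := by
        rintro ⟨x, hx⟩
        rcases hm x hx with rfl | rfl
        · simp
        · simp [hik.symm, hab.symm, Ne.symm hab]
      right_inv := by
        rintro ⟨y, hy⟩
        have : y = a ∨ y = b := by simpa using hy
        rcases this with rfl | rfl
        · simp
        · simp [hab.symm, hik.symm, Ne.symm hik] }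
  have key := Equiv.Set.compl (α := Fin n) (β := Fin n) e₀
  have heq : { e : Fin n ≃ Fin n // ∀ x : ({i,k} : Set (Fin n)), e x = e₀ x }
      ≃ { π : Equiv.Perm (Fin n) // π i = a ∧ π k = b } := by
    refine Equiv.subtypeEquivRight ?_
    intro π
    constructor
    · intro h
      constructor
      · have := h ⟨i, by simp⟩
        simpa [e₀] using this
      · have := h ⟨k, by simp⟩
        simpa [e₀, hik.symm] using this
    · rintro ⟨h1, h2⟩ ⟨x, hx⟩
      rcases hm x hx with rfl | rfl
      · simpa [e₀] using h1
      · simpa [e₀, hik.symm] using h2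
  have hcs : Fintype.card ({i,k} : Set (Fin n)) = 2 := by
    rw [← Set.toFinset_card]
    simp [Set.toFinset_insert, Set.toFinset_singleton, Finset.card_pair hik]
  have hct : Fintype.card ({a,b} : Set (Fin n)) = 2 := by
    rw [← Set.toFinset_card]
    simp [Set.toFinset_insert, Set.toFinset_singleton, Finset.card_pair hab]
  have hcsc : Fintype.card (↥(({i,k} : Set (Fin n))ᶜ)) = n - 2 := by
    rw [Fintype.card_compl_set, hcs, Fintype.card_fin]
  have hctc : Fintype.card (↥(({a,b} : Set (Fin n))ᶜ)) = n - 2 := by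
    rw [Fintype.card_compl_set, hct, Fintype.card_fin]
  have hecc : (↥(({i,k} : Set (Fin n))ᶜ)) ≃ (↥(({a,b} : Set (Fin n))ᶜ)) :=
    Fintype.equivOfCardEq (by rw [hcsc, hctc])
  calc (Finset.univ.filter fun π : Equiv.Perm (Fin n) => π i = a ∧ π k = b).card
      = Fintype.card { π : Equiv.Perm (Fin n) // π i = a ∧ π k = b } := by
        rw [Fintype.card_subtype]
    _ = Fintype.card { e : Fin n ≃ Fin n // ∀ x : ({i,k} : Set (Fin n)), e x = e₀ x } :=
        (Fintype.card_congr heq).symm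
    _ = Fintype.card ((↥(({i,k} : Set (Fin n))ᶜ)) ≃ (↥(({a,b} : Set (Fin n))ᶜ))) :=
        Fintype.card_congr key
    _ = (n - 2).factorial := by rw [Fintype.card_equiv hecc, hcsc]

lemma card_fin_filter_succ_lt (n : ℕ) :
    (Finset.univ.filter fun a : Fin n => a.val + 1 < n).card = n - 1 := by
  cases n with
  | zero => simp
  | succ m =>
    have : (Finset.univ.filter fun a : Fin (m+1) => a.val + 1 < m+1)
        = Finset.Iio (Fin.last m) := by
      ext a
      simp only [Finset.mem_filter, Finset.mem_univ, true_and, Finset.mem_Iio, Fin.lt_def,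
        Fin.val_last]
      omega
    rw [this, Fin.card_Iio]
    simp

lemma card_succ_rel {n : ℕ} (i k : Fin n) (hik : i ≠ k) :
    (Finset.univ.filter fun π : Equiv.Perm (Fin n) => (π i).val + 1 = (π k).val).card
      = (n - 1) * (n - 2).factorial := by
  rw [Finset.card_eq_sum_card_fiberwise
    (f := fun π : Equiv.Perm (Fin n) => π i) (t := Finset.univ) (fun x _ => Finset.mem_univ _)]
  have step : ∀ a : Fin n,
      ((Finset.univ.filter fun π : Equiv.Perm (Fin n) => (π i).val + 1 = (π k).val).filter
        fun π => π i = a).card = if a.val + 1 < n then (n - 2).factorial else 0 := by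
    intro a
    rw [Finset.filter_filter]
    split
    · rename_i h
      have : (Finset.univ.filter fun π : Equiv.Perm (Fin n) =>
          ((π i).val + 1 = (π k).val) ∧ π i = a)
          = Finset.univ.filter fun π : Equiv.Perm (Fin n) => π i = a ∧ π k = ⟨a.val + 1, h⟩ := by
        ext π
        simp only [Finset.mem_filter, Finset.mem_univ, true_and]
        constructor
        · rintro ⟨hv, rfl⟩
          exact ⟨rfl, Fin.ext hv.symm⟩
        · rintro ⟨rfl, hk⟩
          exact ⟨by rw [hk], rfl⟩
      rw [this]
      exact card_perm_two i k a ⟨a.val + 1, h⟩ hik (Fin.ne_of_val_ne (by simp))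
    · rename_i h
      rw [Finset.card_eq_zero, Finset.filter_eq_empty_iff]
      rintro π -
      rintro ⟨hv, rfl⟩
      have := (π k).isLt
      omega
  rw [Finset.sum_congr rfl fun a _ => step a]
  rw [← Finset.sum_filter, Finset.sum_const, smul_eq_mul, card_fin_filter_succ_lt]


/-- The total number, over all permutations `π` of length `n ≥ 1`, of
letters of `π` lying in tails of adjacencies of `π` equals `2(n−1)·(n−1)!`
(equivalently, the average is `2(n−1)/n`). -/
theorem total_tail_letters (n : ℕ) (hn : 1 ≤ n) :
    ∑ π : Equiv.Perm (Fin n),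
        (Finset.univ.filter fun j : Fin n => Linked π j).card =
      2 * (n - 1) * (n - 1).factorial := by
  have swap : (∑ π : Equiv.Perm (Fin n),
      (Finset.univ.filter fun j : Fin n => Linked π j).card)
      = ∑ j : Fin n, (Finset.univ.filter fun π : Equiv.Perm (Fin n) => Linked π j).card := by
    simp_rw [Finset.card_filter]
    exact Finset.sum_comm
  rw [swap]
  have perj : ∀ j : Fin n,
      (Finset.univ.filter fun π : Equiv.Perm (Fin n) => Linked π j).card
      = if 0 < j.val then 2 * ((n - 1) * (n - 2).factorial) else 0 := by
    intro j
    split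
    · rename_i hj
      have hne : j ≠ prevPos j := Fin.ne_of_val_ne (by
        show j.val ≠ j.val - 1
        omega)
      have hfe : (Finset.univ.filter fun π : Equiv.Perm (Fin n) => Linked π j)
          = (Finset.univ.filter fun π : Equiv.Perm (Fin n) =>
              ((π j).val + 1 = (π (prevPos j)).val) ∨ ((π (prevPos j)).val + 1 = (π j).val)) := by
        ext π
        simp [Linked, hj]
      rw [hfe, Finset.filter_or, Finset.card_union_of_disjoint]
      · rw [card_succ_rel j (prevPos j) hne, card_succ_rel (prevPos j) j hne.symm]
        ring
      · rw [Finset.disjoint_filter]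
        intro π _ h1 h2
        omega
    · rename_i hj
      rw [Finset.card_eq_zero, Finset.filter_eq_empty_iff]
      intro π _ hL
      exact hj hL.1
  rw [Finset.sum_congr rfl fun j _ => perj j, ← Finset.sum_filter, Finset.sum_const,
    smul_eq_mul]
  have hcard : (Finset.univ.filter fun j : Fin n => 0 < j.val).card = n - 1 := by
    cases n with
    | zero => simp
    | succ m =>
      have : (Finset.univ.filter fun j : Fin (m+1) => 0 < j.val)
          = Finset.Ioi (0 : Fin (m+1)) := by
        ext a
        simp only [Finset.mem_filter, Finset.mem_univ, true_and, Finset.mem_Ioi, Fin.lt_def,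
          Fin.val_zero]
      rw [this, Fin.card_Ioi]
      simp
  rw [hcard]
  cases n with
  | zero => exact absurd hn (by omega)
  | succ m =>
    cases m with
    | zero => simp
    | succ k =>
      show (k + 1) * (2 * ((k + 1) * (Nat.factorial k))) = 2 * (k + 1) * Nat.factorial (k + 1)
      rw [Nat.factorial_succ]
      ring
end

section
/- Let λ be an indecomposable permutation of length ℓ > 1 and let 1 ≤ m ≤ n. Then Σ_{S ∈ EZ^{λ^m,λ^n}} (−1)^{|S|} = (−1)^{n−m−1}·C(n−1,m−1). -/
open scoped Classical

set_option maxHeartbeats 1000000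

/-! Because `λ` is indecomposable, an occurrence of `λ^m` in `λ^n` cannot spread one copy of `λ`
over two copies of `λ` in `λ^n`, so its positions form `m` whole copies; and since `λ` does not
start with its smallest letter, no adjacency of `λ^n` crosses the boundary between two copies,
so each such union of copies is rightmost. Hence `EZ^{λ^m,λ^n}` is in bijection with the families
of `m`-subsets of `{1,…,n}` covering `{1,…,n}`. Inclusion–exclusion over the uncovered set `W`
turns the signed count into `∑_{|W| > n-m} (-1)^|W|`, a tail of the alternating binomial sum,
which is `(-1)^(n-m+1) C(n-1,m-1)`. -/

open Finset

lemma stdize_lt_stdize_iff {m n : ℕ} (v : Fin m → Fin n) (hv : Function.Injective v)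
    (i j : Fin m) : stdize v hv i < stdize v hv j ↔ v i < v j :=
  (OrderIso.lt_iff_lt (monoEquivOfFin (Set.range v) _).symm).trans Iff.rfl

lemma Equiv.Perm.eq_of_lt_iff_lt {k : ℕ} {σ τ : Equiv.Perm (Fin k)}
    (h : ∀ i j, σ i < σ j ↔ τ i < τ j) : σ = τ := by
  have hmono : StrictMono (τ ∘ σ.symm) := fun a b hab => by simpa [← h] using hab
  ext i
  simpa using congrArg Fin.val (hmono.fin_apply_eq (σ i)).symm

lemma isEmb_iff {k n : ℕ} (q : Equiv.Perm (Fin k)) (π : Equiv.Perm (Fin n))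
    (E : Finset (Fin n)) :
    IsEmb ⟨k, q⟩ π E ↔ ∃ f : Fin k ↪o Fin n,
      Set.range f = E ∧ ∀ i j, q i < q j ↔ π (f i) < π (f j) := by
  constructor
  · intro hE
    obtain ⟨rfl, hq⟩ := Sigma.mk.inj_iff.mp hE
    refine ⟨E.orderEmbOfFin rfl, E.range_orderEmbOfFin rfl, fun i j => ?_⟩
    rw [← eq_of_heq hq]
    exact stdize_lt_stdize_iff _ _ i j
  · rintro ⟨f, hrange, hpat⟩
    obtain rfl : E.card = k := by
      have hE : univ.map f.toEmbedding = E := coe_injective (by simp [hrange])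
      rw [← hE, card_map, card_fin]
    have hf : E.orderEmbOfFin rfl = f :=
      (orderEmbOfFin_unique' rfl fun x => by simp [← mem_coe, ← hrange]).symm
    refine Sigma.mk.inj_iff.mpr ⟨rfl, heq_of_eq (Equiv.Perm.eq_of_lt_iff_lt fun i j => ?_)⟩
    refine (stdize_lt_stdize_iff _ _ i j).trans ?_
    rw [hpat, ← hf]
    rfl

namespace Fin

variable {m n : ℕ}

@[simp] lemma divNat_finProdFinEquiv (x : Fin m × Fin n) : (finProdFinEquiv x).divNat = x.1 :=
  congrArg Prod.fst (finProdFinEquiv.symm_apply_apply x)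

@[simp] lemma modNat_finProdFinEquiv (x : Fin m × Fin n) : (finProdFinEquiv x).modNat = x.2 :=
  congrArg Prod.snd (finProdFinEquiv.symm_apply_apply x)

lemma finProdFinEquiv_divNat_modNat (i : Fin (m * n)) :
    finProdFinEquiv (i.divNat, i.modNat) = i :=
  finProdFinEquiv.apply_symm_apply i

lemma divNat_surjective (hn : 0 < n) : Function.Surjective (divNat : Fin (m * n) → Fin m) :=
  fun c => ⟨finProdFinEquiv (c, ⟨0, hn⟩), by simp⟩

lemma divNat_mono : Monotone (divNat : Fin (m * n) → Fin m) :=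
  fun _ _ h => Nat.div_le_div_right h

lemma lt_iff_divNat_modNat {i j : Fin (m * n)} :
    i < j ↔ i.divNat < j.divNat ∨ i.divNat = j.divNat ∧ i.modNat < j.modNat := by
  conv_lhs => rw [← finProdFinEquiv_divNat_modNat i, ← finProdFinEquiv_divNat_modNat j]
  rw [lt_def, finProdFinEquiv_apply_val, finProdFinEquiv_apply_val, lt_def, lt_def, Fin.ext_iff]
  dsimp only
  have := i.modNat.isLt
  have := j.modNat.isLt
  constructor
  · intro h
    rcases lt_trichotomy (i.divNat : ℕ) j.divNat with h' | h' | h'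
    · exact .inl h'
    · exact .inr ⟨h', by rw [h'] at h; omega⟩
    · nlinarith
  · rintro (h | ⟨h, h'⟩)
    · nlinarith
    · rw [h]; omega

lemma lt_of_divNat_lt {i j : Fin (m * n)} (h : i.divNat < j.divNat) : i < j :=
  lt_iff_divNat_modNat.mpr (.inl h)

end Fin

lemma finProdFinEquiv_lt_finProdFinEquiv {m n : ℕ} {x y : Fin m × Fin n} :
    finProdFinEquiv x < finProdFinEquiv y ↔ x.1 < y.1 ∨ x.1 = y.1 ∧ x.2 < y.2 := by
  simp [Fin.lt_iff_divNat_modNat]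

lemma strictMono_finProdFinEquiv_right {m n : ℕ} (p : Fin m) :
    StrictMono fun r : Fin n => finProdFinEquiv (p, r) :=
  fun _ _ h => finProdFinEquiv_lt_finProdFinEquiv.mpr (.inr ⟨rfl, h⟩)

lemma dsum_castAdd {a b : ℕ} (σ : Equiv.Perm (Fin a)) (τ : Equiv.Perm (Fin b)) (r : Fin a) :
    dsum σ τ (Fin.castAdd b r) = Fin.castAdd b (σ r) := by
  simp [dsum]

lemma dsum_natAdd {a b : ℕ} (σ : Equiv.Perm (Fin a)) (τ : Equiv.Perm (Fin b)) (s : Fin b) :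
    dsum σ τ (Fin.natAdd a s) = Fin.natAdd a (τ s) := by
  simp [dsum]

section dpow

variable {l : ℕ} (lam : Equiv.Perm (Fin l))

lemma dpow_finProdFinEquiv (n : ℕ) (c : Fin n) (r : Fin l) :
    dpow lam n (finProdFinEquiv (c, r)) = finProdFinEquiv (c, lam r) := by
  induction n with
  | zero => exact c.elim0
  | succ n ih =>
    have hsucc : ∀ j, (dpow lam (n + 1) j : ℕ) = dsum (dpow lam n) lam (Fin.cast (by ring) j) :=
      fun _ => rfl
    apply Fin.ext
    rw [hsucc]
    induction c using Fin.lastCases with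
    | last =>
      rw [show Fin.cast _ (finProdFinEquiv (Fin.last n, r)) = Fin.natAdd (n * l) r from
        Fin.ext (by simp; ring), dsum_natAdd]
      simp
      ring
    | cast c =>
      rw [show Fin.cast _ (finProdFinEquiv (c.castSucc, r)) =
        Fin.castAdd l (finProdFinEquiv (c, r)) from Fin.ext (by simp), dsum_castAdd, ih]
      simp

@[simp] lemma divNat_dpow {n : ℕ} (j : Fin (n * l)) : (dpow lam n j).divNat = j.divNat := by
  rw [← Fin.finProdFinEquiv_divNat_modNat j, dpow_finProdFinEquiv]
  simp

lemma dpow_val_of_eq {n : ℕ} {j : Fin (n * l)} {c r : ℕ} (hr : r < l)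
    (hj : (j : ℕ) = r + l * c) : (dpow lam n j : ℕ) = lam ⟨r, hr⟩ + l * c := by
  have hc : c < n := Nat.lt_of_mul_lt_mul_left (a := l) (by
    have := j.isLt
    have := Nat.mul_comm n l
    omega)
  rw [show j = finProdFinEquiv (⟨c, hc⟩, ⟨r, hr⟩) from Fin.ext (by simp [hj]),
    dpow_finProdFinEquiv, finProdFinEquiv_apply_val]

end dpow

lemma not_indecomp_of_forall_lt {a b : ℕ} (lam : Equiv.Perm (Fin (a + b))) (ha : 0 < a)
    (hb : 0 < b) (h : ∀ r s, lam (Fin.castAdd b r) < lam (Fin.natAdd a s)) :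
    ¬ Indecomp ⟨a + b, lam⟩ := by
  have hlow : ∀ r, (lam (Fin.castAdd b r) : ℕ) < a := fun r => by
    have hsub : univ.map ((Fin.natAddEmb a).trans lam.toEmbedding) ⊆
        Ioi (lam (Fin.castAdd b r)) := fun x hx => by
      obtain ⟨s, -, rfl⟩ := mem_map.mp hx
      exact mem_Ioi.mpr (h r s)
    have := card_le_card hsub
    simp only [card_map, card_univ, Fintype.card_fin, Fin.card_Ioi] at this
    omega
  have hhigh : ∀ s, a ≤ (lam (Fin.natAdd a s) : ℕ) := fun s => by
    have hsub : univ.map ((Fin.castAddEmb b).trans lam.toEmbedding) ⊆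
        Iio (lam (Fin.natAdd a s)) := fun x hx => by
      obtain ⟨r, -, rfl⟩ := mem_map.mp hx
      exact mem_Iio.mpr (h r s)
    simpa using card_le_card hsub
  let σ : Equiv.Perm (Fin a) := Equiv.ofBijective (fun r => ⟨lam (Fin.castAdd b r), hlow r⟩)
    (Finite.injective_iff_bijective.mp fun r r' hrr' =>
      Fin.castAdd_injective _ _ (lam.injective (Fin.ext (by simpa using hrr'))))
  let τ : Equiv.Perm (Fin b) := Equiv.ofBijective
    (fun s => ⟨lam (Fin.natAdd a s) - a, by omega⟩)
    (Finite.injective_iff_bijective.mp fun s s' hss' => by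
      have := hhigh s
      have := hhigh s'
      refine Fin.natAdd_injective _ _ (lam.injective (Fin.ext ?_))
      simp only [Fin.mk.injEq] at hss'
      omega)
  have hlam : lam = dsum σ τ := by
    ext x
    induction x using Fin.addCases with
    | left r => simp [dsum_castAdd, σ]
    | right s =>
      simp only [dsum_natAdd, Fin.val_natAdd, Equiv.ofBijective_apply, τ]
      have := hhigh s
      omega
  exact fun hind => hind.2 ⟨a, b, σ, τ, ha, hb, by rw [hlam]⟩

lemma Indecomp.exists_lt_of_lt {l : ℕ} {lam : Equiv.Perm (Fin l)} (hind : Indecomp ⟨l, lam⟩)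
    {a : ℕ} (ha : 0 < a) (hal : a < l) :
    ∃ r s : Fin l, (r : ℕ) < a ∧ a ≤ (s : ℕ) ∧ lam s < lam r := by
  obtain ⟨b, rfl⟩ := Nat.exists_eq_add_of_le hal.le
  by_contra! h
  refine not_indecomp_of_forall_lt lam ha (by omega) (fun r s => ?_) hind
  refine (h _ _ r.isLt (by simp)).lt_of_ne (lam.injective.ne fun hrs => ?_)
  have := congrArg Fin.val hrs
  simp at this
  omega

lemma Indecomp.apply_zero_pos {l : ℕ} {lam : Equiv.Perm (Fin l)} (hind : Indecomp ⟨l, lam⟩)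
    (hl : 1 < l) : 0 < (lam ⟨0, by omega⟩ : ℕ) := by
  obtain ⟨r, s, hr, -, hsr⟩ := hind.exists_lt_of_lt one_pos hl
  rw [show (⟨0, _⟩ : Fin l) = r from Fin.ext (by simp; omega)]
  exact lt_of_le_of_lt (Nat.zero_le _) hsr

lemma linked_of_blockIdx_eq {n : ℕ} (π : Equiv.Perm (Fin n)) {i j k : Fin n}
    (hb : blockIdx π i = blockIdx π j) (hik : i < k) (hkj : k ≤ j) : Linked π k := by
  by_contra hk
  let starts (x : Fin n) := univ.filter fun y => ¬ Linked π y ∧ y ≤ x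
  have hzero : (⟨0, by omega⟩ : Fin n) ∈ starts i :=
    mem_filter.mpr ⟨mem_univ _, fun h => lt_irrefl 0 h.1, Nat.zero_le _⟩
  have hss : starts i ⊂ starts j := by
    refine ssubset_iff_of_subset (fun y hy => ?_) |>.mpr ⟨k, ?_, ?_⟩
    · simp only [starts, mem_filter] at hy ⊢
      exact ⟨hy.1, hy.2.1, hy.2.2.trans (hik.le.trans hkj)⟩
    · simp [starts, hk, hkj]
    · simp [starts, hik]
  have := card_lt_card hss
  have := card_pos.mpr ⟨_, hzero⟩
  have : blockIdx π i < blockIdx π j :=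
    show (starts i).card - 1 < (starts j).card - 1 by omega
  omega

section adjacencies

variable {l : ℕ} {lam : Equiv.Perm (Fin l)}

lemma mod_ne_zero_of_linked_dpow (hl : 1 < l) (hind : Indecomp ⟨l, lam⟩) {n : ℕ}
    {j : Fin (n * l)} (hj : Linked (dpow lam n) j) : (j : ℕ) % l ≠ 0 := by
  intro hj0
  obtain ⟨hpos, hadj⟩ := hj
  obtain ⟨c, hc⟩ : ∃ c, (j : ℕ) = 0 + l * (c + 1) := by
    obtain ⟨q, hq⟩ := Nat.dvd_of_mod_eq_zero hj0
    exact ⟨q - 1, by cases q <;> simp_all⟩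
  have hprev : (prevPos j : ℕ) = (l - 1) + l * c := by
    simp only [prevPos, mul_add] at hc ⊢
    omega
  -- the letters at `j - 1` and `j` are `λ(l-1) + l c < l (c+1) < λ(0) + l (c+1)`
  rw [dpow_val_of_eq lam (by omega) hc, dpow_val_of_eq lam (by omega) hprev, mul_add] at hadj
  have := hind.apply_zero_pos hl
  have := (lam ⟨l - 1, by omega⟩).isLt
  omega

lemma divNat_eq_of_blockIdx_eq (hl : 1 < l) (hind : Indecomp ⟨l, lam⟩) {n : ℕ}
    {i j : Fin (n * l)} (hij : i ≤ j) (hb : blockIdx (dpow lam n) i = blockIdx (dpow lam n) j) :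
    i.divNat = j.divNat := by
  by_contra hne
  have hlt : (i : ℕ) / l < j / l := (Fin.divNat_mono hij).lt_of_ne hne
  let k : Fin (n * l) := ⟨l * (j / l), (Nat.mul_div_le j l).trans_lt j.isLt⟩
  have hik : i < k := by
    have := Nat.lt_mul_div_succ (i : ℕ) (show 0 < l by omega)
    have : l * ((i : ℕ) / l + 1) ≤ l * (j / l) := Nat.mul_le_mul_left l hlt
    exact Fin.lt_def.mpr (by simp only [k]; omega)
  exact mod_ne_zero_of_linked_dpow hl hind
    (linked_of_blockIdx_eq _ hb hik (Nat.mul_div_le j l)) (Nat.mul_mod_right _ _)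

end adjacencies

def copies (l : ℕ) {n : ℕ} (T : Finset (Fin n)) : Finset (Fin (n * l)) :=
  univ.filter fun j => j.divNat ∈ T

@[simp] lemma mem_copies {l n : ℕ} {T : Finset (Fin n)} {j : Fin (n * l)} :
    j ∈ copies l T ↔ j.divNat ∈ T := by
  simp [copies]

lemma copies_injective {l n : ℕ} (hl : 0 < l) :
    Function.Injective (copies l : Finset (Fin n) → Finset (Fin (n * l))) := fun T T' h => by
  ext c
  simpa using congrArg (finProdFinEquiv (c, ⟨0, hl⟩) ∈ ·) h

def copyEmb (l : ℕ) {m n : ℕ} (t : Fin m ↪o Fin n) : Fin (m * l) ↪o Fin (n * l) :=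
  OrderEmbedding.ofStrictMono (fun i => finProdFinEquiv (t i.divNat, i.modNat)) fun _ _ hij => by
    rw [finProdFinEquiv_lt_finProdFinEquiv]
    rcases Fin.lt_iff_divNat_modNat.mp hij with h | ⟨h, h'⟩
    · exact .inl (t.lt_iff_lt.mpr h)
    · exact .inr ⟨congrArg t h, h'⟩

section copyEmb

variable {l m n : ℕ} (t : Fin m ↪o Fin n)

@[simp] lemma copyEmb_finProdFinEquiv (p : Fin m) (r : Fin l) :
    copyEmb l t (finProdFinEquiv (p, r)) = finProdFinEquiv (t p, r) := by
  show finProdFinEquiv (t (finProdFinEquiv (p, r)).divNat, (finProdFinEquiv (p, r)).modNat) = _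
  simp

lemma dpow_copyEmb (lam : Equiv.Perm (Fin l)) (i : Fin (m * l)) :
    dpow lam n (copyEmb l t i) = copyEmb l t (dpow lam m i) := by
  obtain ⟨⟨p, r⟩, rfl⟩ := finProdFinEquiv.surjective i
  simp [dpow_finProdFinEquiv]

lemma range_copyEmb : Set.range (copyEmb l t) = copies l (univ.map t.toEmbedding) := by
  ext j
  simp only [Set.mem_range, mem_coe, mem_copies, mem_map, mem_univ, true_and,
    RelEmbedding.coe_toEmbedding]
  constructor
  · rintro ⟨i, rfl⟩
    obtain ⟨⟨p, r⟩, rfl⟩ := finProdFinEquiv.surjective i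
    exact ⟨p, by simp⟩
  · rintro ⟨p, hp⟩
    exact ⟨finProdFinEquiv (p, j.modNat), by simp [hp, Fin.finProdFinEquiv_divNat_modNat]⟩

end copyEmb

section embeddings

variable {l : ℕ} {lam : Equiv.Perm (Fin l)} {m n : ℕ} {f : Fin (m * l) ↪o Fin (n * l)}

lemma divNat_apply_eq_of_preserves (hind : Indecomp ⟨l, lam⟩)
    (hf : ∀ i j, dpow lam m i < dpow lam m j ↔ dpow lam n (f i) < dpow lam n (f j))
    (p : Fin m) (r : Fin l) :
    (f (finProdFinEquiv (p, r))).divNat = (f (finProdFinEquiv (p, ⟨0, hind.1⟩))).divNat := by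
  set C : Fin l → Fin n := fun r => (f (finProdFinEquiv (p, r))).divNat
  have hmono : Monotone C :=
    Fin.divNat_mono.comp (f.monotone.comp (strictMono_finProdFinEquiv_right p).monotone)
  -- `λ` does not split at `a`, and a letter in a later copy of `λ^n` is larger
  have hstep : ∀ a (ha : 0 < a) (hal : a < l), C ⟨a - 1, by omega⟩ = C ⟨a, hal⟩ := by
    intro a ha hal
    obtain ⟨r, s, hr, hs, hsr⟩ := hind.exists_lt_of_lt ha hal
    have hCsr : C s ≤ C r := by
      by_contra! hrs
      have h1 : dpow lam m (finProdFinEquiv (p, s)) < dpow lam m (finProdFinEquiv (p, r)) := by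
        rw [dpow_finProdFinEquiv, dpow_finProdFinEquiv]
        exact strictMono_finProdFinEquiv_right p hsr
      exact ((hf _ _).mp h1).asymm (Fin.lt_of_divNat_lt (by simpa using hrs))
    refine le_antisymm (hmono (Fin.le_def.mpr (by simp))) ?_
    exact (hmono (Fin.le_def.mpr hs)).trans (hCsr.trans (hmono (Fin.le_def.mpr (by simp; omega))))
  suffices ∀ a (hal : a < l), C ⟨a, hal⟩ = C ⟨0, hind.1⟩ from this r r.isLt
  intro a
  induction a with
  | zero => exact fun _ => rfl
  | succ a ih => exact fun hal => (hstep (a + 1) (by omega) hal).symm.trans (ih (by omega))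

lemma exists_eq_copyEmb (hind : Indecomp ⟨l, lam⟩)
    (hf : ∀ i j, dpow lam m i < dpow lam m j ↔ dpow lam n (f i) < dpow lam n (f j)) :
    ∃ t : Fin m ↪o Fin n, f = copyEmb l t := by
  let C : Fin m → Fin n := fun p => (f (finProdFinEquiv (p, ⟨0, hind.1⟩))).divNat
  have hmod : ∀ p r, (f (finProdFinEquiv (p, r))).modNat = r := fun p => by
    refine StrictMono.fin_apply_eq fun r r' h => ?_
    rcases Fin.lt_iff_divNat_modNat.mp (f.strictMono (strictMono_finProdFinEquiv_right p h))
      with h' | ⟨-, h'⟩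
    · rw [divNat_apply_eq_of_preserves hind hf, divNat_apply_eq_of_preserves hind hf p r'] at h'
      exact absurd h' (lt_irrefl _)
    · exact h'
  have happly : ∀ p r, f (finProdFinEquiv (p, r)) = finProdFinEquiv (C p, r) := fun p r => by
    rw [← Fin.finProdFinEquiv_divNat_modNat (f _), hmod, divNat_apply_eq_of_preserves hind hf]
  have hC : StrictMono C := fun p p' h => by
    have := f.strictMono (finProdFinEquiv_lt_finProdFinEquiv (x := (p, ⟨0, hind.1⟩))
      (y := (p', ⟨0, hind.1⟩)) |>.mpr (.inl h))
    rw [happly, happly, finProdFinEquiv_lt_finProdFinEquiv] at this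
    exact this.resolve_right fun h' => lt_irrefl _ h'.2
  refine ⟨OrderEmbedding.ofStrictMono C hC, ?_⟩
  ext i
  obtain ⟨⟨p, r⟩, rfl⟩ := finProdFinEquiv.surjective i
  simp [happly]

end embeddings

lemma isEmb_dpow_iff {l : ℕ} {lam : Equiv.Perm (Fin l)} (hind : Indecomp ⟨l, lam⟩) {m n : ℕ}
    (E : Finset (Fin (n * l))) :
    IsEmb ⟨m * l, dpow lam m⟩ (dpow lam n) E ↔
      ∃ T : Finset (Fin n), T.card = m ∧ E = copies l T := by
  rw [isEmb_iff]
  constructor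
  · rintro ⟨f, hrange, hf⟩
    obtain ⟨t, rfl⟩ := exists_eq_copyEmb hind hf
    exact ⟨univ.map t.toEmbedding, by simp, coe_injective (by rw [← hrange, range_copyEmb])⟩
  · rintro ⟨T, rfl, rfl⟩
    refine ⟨copyEmb l (T.orderEmbOfFin rfl), by rw [range_copyEmb, map_orderEmbOfFin_univ],
      fun i j => ?_⟩
    simp only [dpow_copyEmb, OrderEmbedding.lt_iff_lt]

lemma ehatMem_dpow_iff {l : ℕ} {lam : Equiv.Perm (Fin l)} (hl : 1 < l)
    (hind : Indecomp ⟨l, lam⟩) {m n : ℕ} (E : Finset (Fin (n * l))) :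
    EhatMem ⟨m * l, dpow lam m⟩ (dpow lam n) E ↔
      ∃ T : Finset (Fin n), T.card = m ∧ E = copies l T := by
  refine ⟨fun h => (isEmb_dpow_iff hind E).mp h.1, fun h => ⟨(isEmb_dpow_iff hind E).mpr h, ?_⟩⟩
  obtain ⟨T, -, rfl⟩ := h
  intro i j hb hij
  simp only [mem_copies, divNat_eq_of_blockIdx_eq hl hind hij hb, imp_self]

theorem sum_covering_neg_one_pow {α : Type*} [Fintype α] [DecidableEq α]
    (A : Finset (Finset α)) :
    ∑ 𝒯 ∈ A.powerset with ∀ x, ∃ T ∈ 𝒯, x ∈ T, (-1 : ℤ) ^ #𝒯 =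
      ∑ W : Finset α with ∀ T ∈ A, ¬ Disjoint W T, (-1 : ℤ) ^ #W := by
  have hcover : ∀ 𝒯 : Finset (Finset α), (∀ x, ∃ T ∈ 𝒯, x ∈ T) ↔ univ \ 𝒯.sup id = ∅ := by
    intro 𝒯
    simp [sdiff_eq_empty_iff_subset, subset_iff, mem_sup]
  calc ∑ 𝒯 ∈ A.powerset with ∀ x, ∃ T ∈ 𝒯, x ∈ T, (-1 : ℤ) ^ #𝒯
      = ∑ 𝒯 ∈ A.powerset, ∑ W ∈ (univ \ 𝒯.sup id).powerset, (-1 : ℤ) ^ #W * (-1) ^ #𝒯 := by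
        rw [sum_filter]
        refine sum_congr rfl fun 𝒯 _ => ?_
        rw [← sum_mul, sum_powerset_neg_one_pow_card]
        simp only [hcover]
        split_ifs <;> simp
    _ = ∑ W : Finset α, ∑ 𝒯 ∈ (A.filter (Disjoint W)).powerset, (-1 : ℤ) ^ #W * (-1) ^ #𝒯 := by
        refine sum_comm' fun 𝒯 W => ?_
        rw [mem_powerset, mem_powerset, subset_sdiff, Finset.disjoint_sup_right, mem_powerset]
        simp only [subset_univ, true_and, id, mem_univ, and_true]
        exact ⟨fun ⟨h1, h2⟩ T hT => mem_filter.mpr ⟨h1 hT, h2 hT⟩,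
          fun h => ⟨fun T hT => (mem_filter.mp (h hT)).1, fun T hT => (mem_filter.mp (h hT)).2⟩⟩
    _ = ∑ W : Finset α with ∀ T ∈ A, ¬ Disjoint W T, (-1 : ℤ) ^ #W := by
        rw [sum_filter]
        refine sum_congr rfl fun W _ => ?_
        rw [← mul_sum, sum_powerset_neg_one_pow_card]
        simp only [filter_eq_empty_iff]
        split_ifs <;> simp

lemma forall_not_disjoint_powersetCard_iff {α : Type*} [Fintype α] [DecidableEq α] {m : ℕ}
    {W : Finset α} : (∀ T ∈ powersetCard m univ, ¬ Disjoint W T) ↔ #Wᶜ < m := by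
  constructor
  · intro h
    by_contra! hm
    obtain ⟨T, hT, hcard⟩ := exists_subset_card_eq hm
    exact h T (mem_powersetCard.mpr ⟨subset_univ _, hcard⟩)
      (disjoint_of_subset_right hT disjoint_compl_right)
  · intro hm T hT hdisj
    have := card_le_card (subset_compl_iff_disjoint_left.mpr hdisj)
    rw [(mem_powersetCard.mp hT).2] at this
    omega

lemma sum_card_compl_lt_neg_one_pow {n m : ℕ} (hm : 1 ≤ m) (hmn : m ≤ n) :
    ∑ W : Finset (Fin n) with #Wᶜ < m, (-1 : ℤ) ^ #W =
      (-1) ^ (n - m + 1) * (n - 1).choose (m - 1) := by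
  have hrange : (range (n + 1)).filter (fun k => n - k < m) = Ico (n - m + 1) (n + 1) := by
    ext k
    simp only [mem_filter, mem_range, mem_Ico]
    omega
  obtain ⟨n, rfl⟩ : ∃ n', n = n' + 1 := ⟨n - 1, by omega⟩
  calc ∑ W : Finset (Fin (n + 1)) with #Wᶜ < m, (-1 : ℤ) ^ #W
      = ∑ k ∈ range (n + 1 + 1), (n + 1).choose k • if n + 1 - k < m then (-1 : ℤ) ^ k else 0 := by
        simp only [card_compl, Fintype.card_fin, sum_filter, ← powerset_univ]
        rw [sum_powerset_apply_card (fun k => if n + 1 - k < m then (-1 : ℤ) ^ k else 0)]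
        simp
    _ = ∑ k ∈ Ico (n + 1 - m + 1) (n + 1 + 1), (-1 : ℤ) ^ k * (n + 1).choose k := by
        rw [← hrange, sum_filter]
        refine sum_congr rfl fun k _ => ?_
        split_ifs <;> simp [mul_comm]
    _ = (-1) ^ (n + 1 - m + 1) * (n + 1 - 1).choose (m - 1) := by
        rw [sum_Ico_eq_sub _ (by omega), Int.alternating_sum_range_choose_of_ne (by omega),
          Int.alternating_sum_range_choose_eq_choose, Nat.add_sub_cancel,
          ← Nat.choose_symm (by omega : m - 1 ≤ n), show n - (m - 1) = n + 1 - m by omega]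
        ring

lemma EZsum_eq_sum_powerset (p : PermPat) {n : ℕ} (π : Equiv.Perm (Fin n)) :
    EZsum p π = ∑ S ∈ (univ.filter (EhatMem p π)).powerset with
      S.Nonempty ∧ ∀ j, ∃ E ∈ S, j ∈ E, (-1 : ℤ) ^ #S := by
  unfold EZsum EZmem
  congr 1
  ext S
  simp only [mem_filter, mem_univ, true_and, mem_powerset, subset_iff]
  tauto

lemma EZsum_dpow_eq_sum_covering {l : ℕ} {lam : Equiv.Perm (Fin l)} (hl : 1 < l)
    (hind : Indecomp ⟨l, lam⟩) {m n : ℕ} (hn : 0 < n) :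
    EZsum ⟨m * l, dpow lam m⟩ (dpow lam n) =
      ∑ 𝒯 ∈ (powersetCard m (univ : Finset (Fin n))).powerset with ∀ c, ∃ T ∈ 𝒯, c ∈ T,
        (-1 : ℤ) ^ #𝒯 := by
  have hinj : Function.Injective (copies l : Finset (Fin n) → Finset (Fin (n * l))) :=
    copies_injective (by omega)
  have hEhat : univ.filter (EhatMem ⟨m * l, dpow lam m⟩ (dpow lam n)) =
      (powersetCard m univ).image (copies l) := by
    ext E
    simp only [mem_filter, mem_univ, true_and, ehatMem_dpow_iff hl hind, mem_image,
      mem_powersetCard, subset_univ]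
    exact exists_congr fun T => and_congr_right fun _ => eq_comm
  rw [EZsum_eq_sum_powerset, hEhat, powerset_image, filter_image,
    sum_image fun _ _ _ _ h => image_injective hinj h]
  refine sum_congr ?_ fun 𝒯 _ => by rw [card_image_of_injective _ hinj]
  ext 𝒯
  simp only [mem_filter, image_nonempty, mem_image, exists_exists_and_eq_and, mem_copies]
  rw [← (Fin.divNat_surjective (by omega : 0 < l)).forall (p := fun c => ∃ T ∈ 𝒯, c ∈ T)]
  refine and_congr_right fun _ => and_iff_right_of_imp fun hcover => ?_
  obtain ⟨T, hT, -⟩ := hcover ⟨0, hn⟩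
  exact ⟨T, hT⟩

/-- For an indecomposable permutation `λ` of length `ℓ > 1` and
`1 ≤ m ≤ n`, `Σ_{S ∈ EZ^{λ^m,λ^n}} (−1)^{|S|} = (−1)^{n−m−1}·C(n−1,m−1)`.
(The sign `(−1)^{n−m−1}` is written `(−1)^{n−m+1}`.) -/
theorem EZsum_dpow {l : ℕ} (lam : Equiv.Perm (Fin l)) (hl : 1 < l)
    (hind : Indecomp ⟨l, lam⟩) (m n : ℕ) (hm : 1 ≤ m) (hmn : m ≤ n) :
    EZsum ⟨m * l, dpow lam m⟩ (dpow lam n) =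
      (-1 : ℤ) ^ (n - m + 1) * ((n - 1).choose (m - 1) : ℤ) := by
  rw [EZsum_dpow_eq_sum_covering hl hind (by omega), ← sum_card_compl_lt_neg_one_pow hm hmn]
  -- `convert` reconciles the `Decidable` instances of the filters over `Fin n` and over a
  -- general finite type
  convert sum_covering_neg_one_pow (powersetCard m (univ : Finset (Fin n))) using 3
  exact forall_not_disjoint_powersetCard_iff.symm
end
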